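/- Let ρ = ⌈a₁/d⌉ with ρ ≥ 3, and suppose every prime factor of a₁ is greater than or equal to ρ. Then Σ_{j=1}^{ρ} ε_j·(j·d − a₁) ≥ −d·C(ρ,2)·⌊ω₁/a₁⌋ − d·C(ρ−1,2), where C(n,2) denotes the binomial coefficient n choose 2 and the sum is computed in ℤ. -/

import Mathlib

/-!
Write `qᵢ = ⌊ωᵢ / a₁⌋`. An element of `I_k` lies in `S` exactly when the Apéry element of its
residue class is at most it, so `|I_k ∩ S| = #{i : qᵢ ≤ k}` and
`ε_j = min(q_j, Q) - min(q_{j-1}, Q)`.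
Summation by parts turns the sum into a nonnegative term minus `d · ∑_{j<ρ} min(q_j, Q)`.
Since every prime factor of `a₁` is at least `ρ`, the multiples `0, ω₁, …, jω₁` (`j < ρ`) are
pairwise incongruent modulo `a₁`; this forces `ω_j ≤ jω₁`, hence `q_j ≤ j q₁ + (j - 1)`, and
summing these bounds gives the claim.
-/

open Set

theorem Nat.le_of_dvd_mul_of_not_dvd {n ρ u w : ℕ} (hprimes : ∀ p, p.Prime → p ∣ n → ρ ≤ p)
    (hu : 0 < u) (hw : ¬ n ∣ w) (h : n ∣ u * w) : ρ ≤ u := by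
  by_contra! huρ
  have hcop : n.Coprime u := Nat.coprime_of_dvd fun p hp hpn hpu =>
    absurd ((hprimes p hp hpn).trans (Nat.le_of_dvd hu hpu)) (by omega)
  exact hw (hcop.dvd_of_dvd_mul_left h)

namespace AddSubmonoid

def apery (S : AddSubmonoid ℕ) (n : ℕ) : Set ℕ := {w | w ∈ S ∧ ¬ ∃ s ∈ S, s + n = w}

variable {S : AddSubmonoid ℕ} {n : ℕ}

theorem add_mul_mem {s : ℕ} (hs : s ∈ S) (hnS : n ∈ S) (t : ℕ) : s + t * n ∈ S :=
  S.add_mem hs (by simpa using S.nsmul_mem hnS t)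

theorem mem_of_le_of_modEq {w m : ℕ} (hw : w ∈ S) (hnS : n ∈ S) (hle : w ≤ m)
    (h : w ≡ m [MOD n]) : m ∈ S := by
  obtain ⟨t, ht⟩ := (Nat.modEq_iff_dvd' hle).mp h
  have hm : m = w + t * n := by rw [mul_comm] at ht; omega
  exact hm ▸ add_mul_mem hw hnS t

theorem apery_le_of_modEq {w s : ℕ} (hnS : n ∈ S) (hw : w ∈ S.apery n) (hs : s ∈ S)
    (h : s ≡ w [MOD n]) : w ≤ s := by
  by_contra! hlt
  obtain ⟨t, ht⟩ := (Nat.modEq_iff_dvd' hlt.le).mp h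
  obtain ⟨t, rfl⟩ := Nat.exists_eq_add_one_of_ne_zero (n := t) (by rintro rfl; omega)
  exact hw.2 ⟨s + t * n, add_mul_mem hs hnS t, by rw [mul_add, mul_comm] at ht; omega⟩

theorem exists_apery_le_modEq (hn : 0 < n) {s : ℕ} (hs : s ∈ S) :
    ∃ w ∈ S.apery n, w ≤ s ∧ w ≡ s [MOD n] := by
  induction s using Nat.strong_induction_on with
  | _ s ih =>
    by_cases h : ∃ s' ∈ S, s' + n = s
    · obtain ⟨s', hs', rfl⟩ := h
      obtain ⟨w, hw, hle, hmod⟩ := ih s' (by omega) hs'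
      exact ⟨w, hw, by omega, hmod.trans (by simp [Nat.ModEq])⟩
    · exact ⟨s, ⟨hs, h⟩, le_rfl, rfl⟩

theorem apery_injOn_mod (hnS : n ∈ S) : InjOn (· % n) (S.apery n) := fun _ hw _ hw' h =>
  le_antisymm (apery_le_of_modEq hnS hw hw'.1 h.symm) (apery_le_of_modEq hnS hw' hw.1 h)

theorem eq_zero_of_mem_apery_of_dvd {w : ℕ} (hnS : n ∈ S) (hw : w ∈ S.apery n) (hdvd : n ∣ w) :
    w = 0 :=
  Nat.le_zero.mp (apery_le_of_modEq hnS hw S.zero_mem (Nat.modEq_zero_iff_dvd.mpr hdvd).symm)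

theorem ncard_Icc_inter_eq_ncard_apery (hn : 0 < n) (hnS : n ∈ S) (k : ℕ) :
    (Icc (k * n) ((k + 1) * n - 1) ∩ S).ncard = {w ∈ S.apery n | w / n ≤ k}.ncard := by
  have hinj : InjOn (fun w => k * n + w % n) {w ∈ S.apery n | w / n ≤ k} := fun w hw w' hw' h =>
    apery_injOn_mod hnS hw.1 hw'.1 (Nat.add_left_cancel h)
  rw [← hinj.ncard_image]
  congr 1
  ext m
  constructor
  · rintro ⟨⟨hlo, hhi⟩, hm⟩
    have hmk : m / n = k := Nat.div_eq_of_lt_le hlo (by rw [add_one_mul] at hhi ⊢; omega)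
    obtain ⟨w, hw, hle, hmod⟩ := exists_apery_le_modEq hn hm
    refine ⟨w, ⟨hw, hmk ▸ Nat.div_le_div_right hle⟩, ?_⟩
    have := Nat.div_add_mod m n
    rw [hmk, mul_comm] at this
    change k * n + w % n = m
    rw [show w % n = m % n from hmod]
    omega
  · rintro ⟨w, ⟨hw, hwk⟩, rfl⟩
    dsimp only
    have hlt : w % n < n := Nat.mod_lt w hn
    have hdiv := Nat.div_add_mod w n
    refine ⟨⟨Nat.le_add_right _ _, by rw [add_one_mul]; omega⟩, ?_⟩
    refine mem_of_le_of_modEq hw.1 hnS ?_ ?_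
    · nlinarith [Nat.mul_le_mul_left n hwk]
    · simp [Nat.ModEq, Nat.add_mod]

theorem ncard_apery_div_le_eq {ω : ℕ → ℕ} (hω : InjOn ω (Iio n)) (hωS : ω '' Iio n = S.apery n)
    (k : ℕ) : {w ∈ S.apery n | w / n ≤ k}.ncard = {i | i < n ∧ ω i / n ≤ k}.ncard := by
  have hinj : InjOn ω {i | i < n ∧ ω i / n ≤ k} := hω.mono fun i hi => hi.1
  rw [← hinj.ncard_image, ← hωS]
  congr 1
  ext w
  simp only [mem_ofPred_eq, mem_image, mem_Iio]
  constructor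
  · rintro ⟨⟨i, hi, rfl⟩, hk⟩
    exact ⟨i, ⟨hi, hk⟩, rfl⟩
  · rintro ⟨i, ⟨hi, hk⟩, rfl⟩
    exact ⟨⟨i, hi, rfl⟩, hk⟩

theorem le_of_finset_subset_apery {ω : ℕ → ℕ} (hω : StrictMonoOn ω (Iio n))
    (hωS : ω '' Iio n = S.apery n) {T : Finset ℕ} (hT : ↑T ⊆ S.apery n) {j x : ℕ}
    (hj : j < T.card) (hx : ∀ w ∈ T, w ≤ x) : ω j ≤ x := by
  by_contra! hxj
  have hsub : T ⊆ (Finset.range j).image ω := by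
    intro w hwT
    obtain ⟨i, hi, rfl⟩ := hωS ▸ hT hwT
    refine Finset.mem_image_of_mem ω (Finset.mem_range.mpr ?_)
    by_contra! hji
    exact absurd (hω.monotoneOn (lt_of_le_of_lt hji hi) hi hji) (by linarith [hx _ hwT])
  have := (Finset.card_le_card hsub).trans Finset.card_image_le
  simp only [Finset.card_range] at this
  omega

/-- The Apéry elements in the classes of `0, w, …, j w` are `j + 1` distinct elements `≤ j w`. -/
theorem le_mul_of_not_modEq (hn : 0 < n) {ω : ℕ → ℕ}
    (hω : StrictMonoOn ω (Iio n)) (hωS : ω '' Iio n = S.apery n) {w j : ℕ} (hw : w ∈ S)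
    (hinc : ∀ i i', i < i' → i' ≤ j → ¬ i * w ≡ i' * w [MOD n]) : ω j ≤ j * w := by
  choose f hfS hfle hfmod using fun i => exists_apery_le_modEq hn (S.nsmul_mem hw i)
  have hinj : InjOn f (Finset.range (j + 1)) := by
    intro i hi i' hi' h
    simp only [Finset.coe_range, mem_Iio] at hi hi'
    have hmod : i • w ≡ i' • w [MOD n] := (hfmod i).symm.trans (h ▸ hfmod i')
    simp only [smul_eq_mul] at hmod
    rcases lt_trichotomy i i' with hlt | heq | hgt
    · exact absurd hmod (hinc i i' hlt (by omega))
    · exact heq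
    · exact absurd hmod.symm (hinc i' i hgt (by omega))
  refine le_of_finset_subset_apery hω hωS (T := (Finset.range (j + 1)).image f) ?_ ?_ ?_
  · simp [Set.subset_def, hfS]
  · rw [Finset.card_image_of_injOn hinj, Finset.card_range]
    omega
  · simp only [Finset.mem_image, Finset.mem_range, forall_exists_index, and_imp]
    rintro _ i hi rfl
    exact (hfle i).trans (by simpa using Nat.mul_le_mul_right w (Nat.lt_succ_iff.mp hi))

theorem apery_le_mul_apery_one (hn : 1 < n) (hnS : n ∈ S) {ω : ℕ → ℕ}
    (hω : StrictMonoOn ω (Iio n)) (hωS : ω '' Iio n = S.apery n) {ρ : ℕ}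
    (hprimes : ∀ p, p.Prime → p ∣ n → ρ ≤ p) {j : ℕ} (hj : j < ρ) : ω j ≤ j * ω 1 := by
  have hω1 : ω 1 ∈ S.apery n := hωS ▸ mem_image_of_mem ω (mem_Iio.mpr hn)
  have hndvd : ¬ n ∣ ω 1 := fun hdvd => by
    have h01 : ω 0 < ω 1 := hω (mem_Iio.mpr (by omega)) (mem_Iio.mpr hn) zero_lt_one
    have := eq_zero_of_mem_apery_of_dvd hnS hω1 hdvd
    omega
  refine le_mul_of_not_modEq (by omega) hω hωS hω1.1 fun i i' hii' hi' hmod => ?_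
  have hdvd : n ∣ (i' - i) * ω 1 := by
    rw [Nat.sub_mul]
    exact (Nat.modEq_iff_dvd' (Nat.mul_le_mul_right _ hii'.le)).mp hmod
  have := Nat.le_of_dvd_mul_of_not_dvd hprimes (by omega) hndvd hdvd
  omega

end AddSubmonoid

namespace MonotoneOn

variable {q : ℕ → ℕ} {n j : ℕ}

theorem ncard_setOf_le_eq_iff (hq : MonotoneOn q (Iio n)) (hj : 1 ≤ j) (hjn : j < n) (k : ℕ) :
    {i | i < n ∧ q i ≤ k}.ncard = j ↔ q (j - 1) ≤ k ∧ k < q j := by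
  have hncard : ∀ m, (Iio m).ncard = m := fun m => by
    rw [← Finset.coe_range, ncard_coe_finset, Finset.card_range]
  have hfin : {i | i < n ∧ q i ≤ k}.Finite := (finite_Iio n).subset fun i hi => hi.1
  constructor
  · intro hcard
    constructor
    · by_contra! hk
      have hsub : {i | i < n ∧ q i ≤ k} ⊆ Iio (j - 1) := fun i ⟨hi, hik⟩ => by
        by_contra! hji
        have := hq (mem_Iio.mpr (by omega : j - 1 < n)) (mem_Iio.mpr hi) (not_lt.mp hji)
        omega
      have := ncard_le_ncard hsub (finite_Iio _)
      rw [hncard] at this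
      omega
    · by_contra! hk
      have hsub : Iio (j + 1) ⊆ {i | i < n ∧ q i ≤ k} := fun i hi => by
        rw [mem_Iio] at hi
        exact ⟨by omega, (hq (mem_Iio.mpr (by omega)) (mem_Iio.mpr hjn) (by omega)).trans hk⟩
      have := ncard_le_ncard hsub hfin
      rw [hncard] at this
      omega
  · rintro ⟨hlo, hhi⟩
    have hset : {i | i < n ∧ q i ≤ k} = Iio j := by
      ext i
      rw [mem_ofPred_eq, mem_Iio]
      constructor
      · rintro ⟨hi, hik⟩
        by_contra! hji
        have := hq (mem_Iio.mpr hjn) (mem_Iio.mpr hi) hji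
        omega
      · intro hij
        refine ⟨by omega, le_trans ?_ hlo⟩
        exact hq (mem_Iio.mpr (by omega)) (mem_Iio.mpr (by omega)) (by omega)
    rw [hset, hncard]

theorem ncard_setOf_ncard_eq (hq : MonotoneOn q (Iio n)) (hj : 1 ≤ j) (hjn : j < n)
    (Q : ℕ) : {k | k < Q ∧ {i | i < n ∧ q i ≤ k}.ncard = j}.ncard
      = min (q j) Q - min (q (j - 1)) Q := by
  have hset : {k | k < Q ∧ {i | i < n ∧ q i ≤ k}.ncard = j}
      = ↑(Finset.Ico (q (j - 1)) (min (q j) Q)) := by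
    ext k
    rw [mem_ofPred_eq, hq.ncard_setOf_le_eq_iff hj hjn, Finset.coe_Ico, mem_Ico]
    omega
  have := hq (mem_Iio.mpr (by omega)) (mem_Iio.mpr hjn) (Nat.sub_le j 1)
  rw [hset, ncard_coe_finset, Nat.card_Ico]
  omega

end MonotoneOn

theorem Nat.mul_div_le_mul_div_add_pred (j x n : ℕ) : j * x / n ≤ j * (x / n) + (j - 1) := by
  rcases Nat.eq_zero_or_pos n with rfl | hn
  · simp
  rcases Nat.eq_zero_or_pos j with rfl | hj
  · simp
  have hsplit : j * x = j * (x % n) + n * (j * (x / n)) := by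
    nth_rewrite 1 [← Nat.mod_add_div x n]
    ring
  rw [hsplit, Nat.add_mul_div_left _ _ hn]
  have : j * (x % n) / n < j := Nat.div_lt_of_lt_mul (by
    rw [mul_comm n]; exact Nat.mul_lt_mul_of_pos_left (Nat.mod_lt x hn) hj)
  omega

theorem Finset.sum_range_mul_add_pred (m c : ℕ) :
    ∑ j ∈ range m, (j * c + (j - 1)) = m.choose 2 * c + (m - 1).choose 2 := by
  rw [sum_add_distrib, ← sum_mul, sum_range_id, ← Nat.choose_two_right]
  congr 1
  rcases m with _ | m
  · simp
  · simp only [sum_range_succ', Nat.add_sub_cancel, Nat.zero_sub, add_zero, sum_range_id,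
      Nat.choose_two_right]

theorem Finset.sum_Icc_sub_mul_sub (M : ℕ → ℤ) (D A : ℤ) (n : ℕ) :
    ∑ j ∈ Icc 1 n, (M j - M (j - 1)) * (j * D - A)
      = M n * (n * D - A) + M 0 * A - D * ∑ j ∈ range n, M j := by
  induction n with
  | zero => simp
  | succ m ih =>
    rw [sum_Icc_succ_top (by omega), ih, sum_range_succ, Nat.add_sub_cancel]
    push_cast
    ring

theorem le_mul_of_intCast_eq_ceil_div {n d ρ : ℕ} (hd : 0 < d) (hρ : (ρ : ℤ) = ⌈(n : ℚ) / d⌉) :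
    n ≤ ρ * d := by
  have h : (n : ℚ) / d ≤ ρ := by exact_mod_cast hρ ▸ Int.le_ceil _
  rw [div_le_iff₀ (by exact_mod_cast hd)] at h
  exact_mod_cast h

theorem lt_of_intCast_eq_ceil_div {n d ρ : ℕ} (hd : 2 ≤ d) (hρ : (ρ : ℤ) = ⌈(n : ℚ) / d⌉)
    (hρ2 : 2 ≤ ρ) : ρ < n := by
  have h : (ρ : ℚ) < n / d + 1 := by exact_mod_cast hρ ▸ Int.ceil_lt_add_one _
  have hd' : (2 : ℚ) ≤ d := by exact_mod_cast hd
  have hρ' : (2 : ℚ) ≤ ρ := by exact_mod_cast hρ2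
  have hnd : (n : ℚ) / d ≤ n / 2 := div_le_div_of_nonneg_left (by positivity) (by norm_num) hd'
  exact_mod_cast (by linarith : (ρ : ℚ) < n)

theorem stmt12
    (d : ℕ) (hd : 2 ≤ d)
    (a : Fin d → ℕ)
    (ha_pos : ∀ i, 0 < a i)
    (a1 : ℕ) (ha1 : a1 = a ⟨0, by omega⟩)
    (S : Set ℕ)
    (hS : S = {m : ℕ | ∃ c : Fin d → ℕ, m = ∑ i, c i * a i})
    (ω : ℕ → ℕ)
    (hω_mono : ∀ i j : ℕ, i < j → j < a1 → ω i < ω j)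
    (hω_range : ω '' Set.Iio a1 = {w ∈ S | ¬ ∃ s ∈ S, s + a1 = w})
    (Q : ℕ)
    (I : ℕ → Set ℕ) (hI : ∀ k, I k = Set.Icc (k * a1) ((k + 1) * a1 - 1))
    (ε : ℕ → ℕ) (hε : ∀ j, ε j = {k : ℕ | k < Q ∧ (I k ∩ S).ncard = j}.ncard)
    (ρ : ℕ) (hρ : (ρ : ℤ) = ⌈(a1 : ℚ) / (d : ℚ)⌉) (hρ3 : 3 ≤ ρ)
    (hprimes : ∀ p : ℕ, p.Prime → p ∣ a1 → ρ ≤ p)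
    :
    -((d : ℤ) * (ρ.choose 2 : ℤ) * ((ω 1 / a1 : ℕ) : ℤ)) - (d : ℤ) * (((ρ - 1).choose 2 : ℕ) : ℤ)
      ≤ ∑ j ∈ Finset.Icc 1 ρ, (ε j : ℤ) * ((j : ℤ) * (d : ℤ) - (a1 : ℤ)) := by
  set T := AddSubmonoid.closure (range a)
  obtain rfl : S = T := by
    ext m
    simp [hS, T, AddSubmonoid.mem_closure_range_iff_of_fintype]
  have ha1pos : 0 < a1 := ha1 ▸ ha_pos _
  have ha1T : a1 ∈ T := AddSubmonoid.subset_closure ⟨_, ha1.symm⟩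
  have hρd : a1 ≤ ρ * d := le_mul_of_intCast_eq_ceil_div (by omega) hρ
  have hρa1 : ρ < a1 := lt_of_intCast_eq_ceil_div hd hρ (by omega)
  have hω : StrictMonoOn ω (Iio a1) := fun i _ j hj hij => hω_mono i j hij hj
  have hq : MonotoneOn (ω · / a1) (Iio a1) := fun i hi i' hi' h =>
    Nat.div_le_div_right (hω.monotoneOn hi hi' h)
  set M : ℕ → ℤ := fun j => (min (ω j / a1) Q : ℕ)
  have hε_eq : ∀ j ∈ Finset.Icc 1 ρ, (ε j : ℤ) = M j - M (j - 1) := by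
    intro j hj
    rw [Finset.mem_Icc] at hj
    simp only [hε, hI, T.ncard_Icc_inter_eq_ncard_apery ha1pos ha1T,
      AddSubmonoid.ncard_apery_div_le_eq hω.injOn hω_range,
      hq.ncard_setOf_ncard_eq hj.1 (by omega) Q, M]
    exact Nat.cast_sub <| min_le_min_right Q <|
      hq (mem_Iio.mpr (by omega)) (mem_Iio.mpr (by omega)) (Nat.sub_le j 1)
  have hq_le : ∀ j < ρ, ω j / a1 ≤ j * (ω 1 / a1) + (j - 1) := fun j hj =>
    (Nat.div_le_div_right (T.apery_le_mul_apery_one (by omega) ha1T hω hω_range hprimes hj)).trans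
      (Nat.mul_div_le_mul_div_add_pred j _ _)
  have hsumM :
      ∑ j ∈ Finset.range ρ, M j ≤ ((ρ.choose 2 * (ω 1 / a1) + (ρ - 1).choose 2 : ℕ) : ℤ) := by
    rw [← Finset.sum_range_mul_add_pred, Nat.cast_sum]
    exact Finset.sum_le_sum fun j hj => by
      simp only [M]
      exact_mod_cast (min_le_left _ _).trans (hq_le j (Finset.mem_range.mp hj))
  rw [Finset.sum_congr rfl fun j hj => by rw [hε_eq j hj], Finset.sum_Icc_sub_mul_sub]
  have hMρ : 0 ≤ M ρ * (ρ * d - a1) :=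
    mul_nonneg (by positivity) (sub_nonneg.mpr (by exact_mod_cast hρd))
  have hM0 : 0 ≤ M 0 * a1 := by positivity
  rw [Nat.cast_add, Nat.cast_mul] at hsumM
  nlinarith [mul_le_mul_of_nonneg_left hsumM (Nat.cast_nonneg d : (0 : ℤ) ≤ d)]
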